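/- Let d be a prime, n ≥ 1, Γ a symmetric n×n matrix over ZMod d with zero diagonal, and ψ_Γ the graph-state amplitude function. Then for every subset A ⊆ Fin n with complement B, the Schmidt rank of the graph state satisfies r(ψ_Γ) ≥ d ^ (Matrix.rank Γ_{A,B}), where Γ_{A,B} is the off-diagonal block of Γ with rows in A and columns in B and its rank is taken over ZMod d. Consequently the Schmidt measure E_S(ψ_Γ) = log_d r(ψ_Γ) is bounded below by the maximum over all bipartitions of the ZMod d-rank of the corresponding off-diagonal block of the adjacency matrix. -/

import Mathlib

/-- The graph-state amplitude function of an adjacency matrix `Γ` over `ZMod d`. -/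
noncomputable def graphState (d n : ℕ) (ω : ℂ) (Γ : Matrix (Fin n) (Fin n) (ZMod d)) :
    (Fin n → ZMod d) → ℂ := fun x =>
  (((d : ℝ) ^ (-(n : ℝ) / 2) : ℝ) : ℂ) *
    ω ^ (∑ u : Fin n, ∑ v : Fin n, if u < v then Γ u v * x u * x v else 0).val

/-- The Schmidt rank of `ψ : (Fin n → ZMod d) → ℂ`: the least `R` such that `ψ` is a
sum of `R` product functions. -/
noncomputable def schmidtRank {d n : ℕ} (ψ : (Fin n → ZMod d) → ℂ) : ℕ :=
  sInf {R : ℕ | ∃ f : Fin R → Fin n → ZMod d → ℂ, ∀ x, ψ x = ∑ i, ∏ j, f i j (x j)}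

/-!
Cut the sites into `A` and `Aᶜ` and read an amplitude function `ψ` as a matrix whose rows and
columns are the configurations on `A` and on `Aᶜ` (its flattening). A sum of `R` product
functions flattens to a product of an `_ × R` and an `R × _` matrix, so the Schmidt rank is at
least the rank of every flattening.

For a graph state the phase of `glue a b` splits as `q_A(a) + q_B(b) + a ⬝ᵥ N *ᵥ b` with `N`
the off-diagonal block, so up to invertible diagonal factors the flattening is the matrix
`e (a ⬝ᵥ N *ᵥ b)` for the injective character `e k = ω ^ k.val` of `ZMod d`. Its columns
contain the characters `a ↦ e (a ⬝ᵥ c)` for all `c` in the range of `N`; these are pairwise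
distinct, hence linearly independent, and there are `d ^ rank N` of them.
-/

open Matrix Finset

namespace Finset

variable {ι α : Type*} [DecidableEq ι] [Fintype ι] (A : Finset ι)

def glue (a : A → α) (b : ↥Aᶜ → α) : ι → α :=
  fun u => if h : u ∈ A then a ⟨u, h⟩ else b ⟨u, mem_compl.2 h⟩

@[simp]
theorem glue_apply_mem (a : A → α) (b : ↥Aᶜ → α) (i : A) : A.glue a b i = a i :=
  dif_pos i.2

@[simp]
theorem glue_apply_mem_compl (a : A → α) (b : ↥Aᶜ → α) (j : ↥Aᶜ) : A.glue a b j = b j :=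
  dif_neg (mem_compl.1 j.2)

theorem glue_add [AddZeroClass α] (a a' : A → α) (b b' : ↥Aᶜ → α) :
    A.glue (a + a') (b + b') = A.glue a b + A.glue a' b' := by
  ext u
  by_cases h : u ∈ A <;> simp [glue, h]

@[to_additive]
theorem prod_glue {M : Type*} [CommMonoid M] (g : ι → α → M) (a : A → α) (b : ↥Aᶜ → α) :
    ∏ u, g u (A.glue a b u) = (∏ i : A, g i (a i)) * ∏ j : ↥Aᶜ, g j (b j) := by
  rw [← prod_mul_prod_compl A, ← prod_coe_sort A, ← prod_coe_sort Aᶜ]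
  simp

theorem glue_zero_dotProduct [NonUnitalNonAssocSemiring α] (a : A → α) (w : ι → α) :
    A.glue a 0 ⬝ᵥ w = a ⬝ᵥ fun i : A => w i := by
  simp [dotProduct, sum_glue (g := fun u t => t * w u)]

theorem dotProduct_glue_zero [NonUnitalNonAssocSemiring α] (w : ι → α) (b : ↥Aᶜ → α) :
    w ⬝ᵥ A.glue 0 b = (fun j : ↥Aᶜ => w j) ⬝ᵥ b := by
  simp [dotProduct, sum_glue (g := fun u t => w u * t)]

end Finset

namespace Matrix

variable {ι R : Type*} [Fintype ι] [LinearOrder ι] [CommSemiring R]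

def upperQuadForm (Γ : Matrix ι ι R) (x : ι → R) : R :=
  ∑ u, ∑ v, if u < v then Γ u v * x u * x v else 0

theorem upperQuadForm_add {Γ : Matrix ι ι R} (hΓ : Γ.IsSymm) {x y : ι → R}
    (hxy : ∀ u, x u * y u = 0) :
    upperQuadForm Γ (x + y) = upperQuadForm Γ x + upperQuadForm Γ y + x ⬝ᵥ Γ *ᵥ y := by
  have cross : ∀ u v, (if u < v then Γ u v * x u * y v else 0) +
      (if v < u then Γ v u * y v * x u else 0) = x u * (Γ u v * y v) := by
    intro u v
    rcases lt_trichotomy u v with h | rfl | h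
    · simp [h, h.not_gt]; ring
    · simp [mul_left_comm (x u), hxy]
    · simp [h, h.not_gt, hΓ.apply u v]; ring
  calc upperQuadForm Γ (x + y)
      = upperQuadForm Γ x + upperQuadForm Γ y +
          ((∑ u, ∑ v, if u < v then Γ u v * x u * y v else 0) +
            ∑ u, ∑ v, if u < v then Γ u v * y u * x v else 0) := by
        simp only [upperQuadForm, ← sum_add_distrib]
        refine sum_congr rfl fun u _ => sum_congr rfl fun v _ => ?_
        split_ifs
        · simp only [Pi.add_apply]; ring
        · simp
    _ = upperQuadForm Γ x + upperQuadForm Γ y + x ⬝ᵥ Γ *ᵥ y := by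
        rw [sum_comm (f := fun u v => if u < v then Γ u v * y u * x v else 0)]
        simp only [dotProduct, mulVec, ← cross, sum_add_distrib, mul_sum]

theorem upperQuadForm_glue {Γ : Matrix ι ι R} (hΓ : Γ.IsSymm) (A : Finset ι) (a : A → R)
    (b : ↥Aᶜ → R) :
    upperQuadForm Γ (A.glue a b) = upperQuadForm Γ (A.glue a 0) + upperQuadForm Γ (A.glue 0 b) +
      a ⬝ᵥ Γ.submatrix (fun i : A => (i : ι)) (fun j : ↥Aᶜ => (j : ι)) *ᵥ b := by
  have disjoint : ∀ u, A.glue a 0 u * A.glue 0 b u = 0 := by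
    intro u
    by_cases h : u ∈ A <;> simp [glue, h]
  have cross : A.glue a 0 ⬝ᵥ Γ *ᵥ A.glue 0 b =
      a ⬝ᵥ Γ.submatrix (fun i : A => (i : ι)) (fun j : ↥Aᶜ => (j : ι)) *ᵥ b := by
    rw [glue_zero_dotProduct]
    congr with i
    exact dotProduct_glue_zero A _ b
  rw [← cross, ← upperQuadForm_add hΓ disjoint, ← glue_add, add_zero, zero_add]

theorem card_le_rank_of_linearIndependent {m n K ι : Type*} [Fintype m] [Fintype n]
    [Field K] [Fintype ι] {M : Matrix m n K} {v : ι → m → K} (hv : LinearIndependent K v)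
    (hcol : ∀ i, v i ∈ Set.range M.col) : Fintype.card ι ≤ M.rank := by
  rw [rank_eq_finrank_span_cols, ← finrank_span_eq_card hv]
  exact Submodule.finrank_mono (Submodule.span_mono (Set.range_subset_iff.2 hcol))

theorem rank_diagonal_mul_mul_diagonal {m n : Type*} [Fintype m] [Fintype n]
    [DecidableEq m] [DecidableEq n] {R : Type*} [CommRing R] {f : m → R} {g : n → R}
    (hf : IsUnit f) (hg : IsUnit g) (M : Matrix m n R) :
    (diagonal f * M * diagonal g).rank = M.rank := by
  rw [rank_mul_eq_left_of_isUnit_det _ _ ((isUnit_iff_isUnit_det _).1 (isUnit_diagonal.2 hg)),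
    rank_mul_eq_right_of_isUnit_det _ _ ((isUnit_iff_isUnit_det _).1 (isUnit_diagonal.2 hf))]

end Matrix

section Flattening

variable {ι α K : Type*} [DecidableEq ι] [Fintype ι] [CommRing K]

def flattening (A : Finset ι) (ψ : (ι → α) → K) : Matrix (A → α) (↥Aᶜ → α) K :=
  of fun a b => ψ (A.glue a b)

theorem rank_flattening_le [StrongRankCondition K] [Fintype α] {ψ : (ι → α) → K} {R : ℕ}
    {f : Fin R → ι → α → K} (hf : ∀ x, ψ x = ∑ r, ∏ j, f r j (x j)) (A : Finset ι) :
    (flattening A ψ).rank ≤ R := by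
  have factor : flattening A ψ =
      of (fun a r => ∏ i : A, f r i (a i)) * of fun r b => ∏ j : ↥Aᶜ, f r j (b j) := by
    ext a b
    simp [flattening, hf, mul_apply, prod_glue]
  rw [factor]
  exact (rank_mul_le_left _ _).trans ((rank_le_card_width _).trans_eq (Fintype.card_fin R))

end Flattening

section SchmidtRank

variable {d n : ℕ} [NeZero d]

theorem exists_productDecomposition (j₀ : Fin n) (ψ : (Fin n → ZMod d) → ℂ) :
    ∃ f : Fin (Fintype.card (Fin n → ZMod d)) → Fin n → ZMod d → ℂ,
      ∀ x, ψ x = ∑ r, ∏ j, f r j (x j) := by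
  classical
  let y := (Fintype.equivFin (Fin n → ZMod d)).symm
  refine ⟨fun r j t => (if j = j₀ then ψ (y r) else 1) * if t = y r j then 1 else 0, fun x => ?_⟩
  simp only [prod_mul_distrib, prod_ite_eq', mem_univ, if_true, prod_boole, true_implies]
  rw [Equiv.sum_comp y (fun z => ψ z * if ∀ j, x j = z j then 1 else 0)]
  simp [← funext_iff]

/- The site `j₀` matters: with no sites every product is `1`, so `ψ` decomposes only if its
single value is a natural number, and otherwise `schmidtRank ψ` is the junk value `sInf ∅ = 0`. -/
theorem exists_productDecomposition_schmidtRank (j₀ : Fin n) (ψ : (Fin n → ZMod d) → ℂ) :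
    ∃ f : Fin (schmidtRank ψ) → Fin n → ZMod d → ℂ, ∀ x, ψ x = ∑ r, ∏ j, f r j (x j) :=
  Nat.sInf_mem (s := {R | ∃ f : Fin R → Fin n → ZMod d → ℂ, ∀ x, ψ x = ∑ r, ∏ j, f r j (x j)})
    ⟨_, exists_productDecomposition j₀ ψ⟩

theorem rank_flattening_le_schmidtRank (j₀ : Fin n) (ψ : (Fin n → ZMod d) → ℂ)
    (A : Finset (Fin n)) : (flattening A ψ).rank ≤ schmidtRank ψ :=
  (exists_productDecomposition_schmidtRank j₀ ψ).elim fun _ hf => rank_flattening_le hf A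

end SchmidtRank

section CharacterMatrix

open Function

variable {m n F M : Type*} [Fintype m] [Fintype n]

def dotProductChar [CommRing F] [CommMonoid M] (e : AddChar F M) (c : m → F) :
    AddChar (m → F) M :=
  e.compAddMonoidHom ⟨⟨(· ⬝ᵥ c), zero_dotProduct c⟩, fun a b => add_dotProduct a b c⟩

theorem dotProductChar_injective [CommRing F] [CommMonoid M] [DecidableEq m] {e : AddChar F M}
    (he : Injective e) : Injective (dotProductChar (m := m) e) := by
  intro c c' h
  ext i
  apply he
  simpa [dotProductChar] using DFunLike.congr_fun h (Pi.single i 1)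

def charMatrix [CommRing F] [CommMonoid M] (e : AddChar F M) (N : Matrix m n F) :
    Matrix (m → F) (n → F) M :=
  of fun a b => e (a ⬝ᵥ N *ᵥ b)

theorem card_pow_rank_le_rank_charMatrix [Field F] [Fintype F] [DecidableEq m] [DecidableEq n]
    {𝕜 : Type*} [RCLike 𝕜] {e : AddChar F 𝕜} (he : Injective e) (N : Matrix m n F) :
    Fintype.card F ^ N.rank ≤ (charMatrix e N).rank := by
  classical
  have independent : LinearIndependent 𝕜 fun c : LinearMap.range N.mulVecLin =>
      (dotProductChar e (c : m → F) : (m → F) → 𝕜) :=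
    (AddChar.linearIndependent _ 𝕜).comp _
      ((dotProductChar_injective he).comp Subtype.val_injective)
  rw [rank, ← Module.card_eq_pow_finrank]
  refine card_le_rank_of_linearIndependent independent ?_
  rintro ⟨_, b, rfl⟩
  exact ⟨b, rfl⟩

end CharacterMatrix

theorem IsPrimitiveRoot.zmodChar_injective {d : ℕ} [NeZero d] {ω : ℂ}
    (hω : IsPrimitiveRoot ω d) : Function.Injective (AddChar.zmodChar d hω.pow_eq_one) :=
  fun x y h => ZMod.val_injective d (hω.pow_inj (ZMod.val_lt x) (ZMod.val_lt y) h)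

theorem flattening_graphState {d n : ℕ} [NeZero d] {ω : ℂ} (hω : ω ^ d = 1)
    {Γ : Matrix (Fin n) (Fin n) (ZMod d)} (hΓ : Γ.IsSymm) (A : Finset (Fin n)) :
    flattening A (graphState d n ω Γ) =
      diagonal (fun a => (((d : ℝ) ^ (-(n : ℝ) / 2) : ℝ) : ℂ) *
          AddChar.zmodChar d hω (upperQuadForm Γ (A.glue a 0))) *
        charMatrix (AddChar.zmodChar d hω)
          (Γ.submatrix (fun i : A => (i : Fin n)) (fun j : ↥Aᶜ => (j : Fin n))) *
        diagonal (fun b => AddChar.zmodChar d hω (upperQuadForm Γ (A.glue 0 b))) := by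
  ext a b
  simp only [flattening, of_apply, diagonal_mul, mul_diagonal, charMatrix]
  rw [graphState, ← AddChar.zmodChar_apply hω, ← upperQuadForm, upperQuadForm_glue hΓ,
    AddChar.map_add_eq_mul, AddChar.map_add_eq_mul]
  ring

theorem schmidtRank_ge_rank_block
    (d n : ℕ) (hd : Nat.Prime d) (hn : 1 ≤ n)
    (ω : ℂ) (hω : IsPrimitiveRoot ω d)
    (Γ : Matrix (Fin n) (Fin n) (ZMod d)) (hΓsymm : Γ.IsSymm)
    (A : Finset (Fin n)) :
    d ^ Matrix.rank (Γ.submatrix (fun i : {u // u ∈ A} => (i : Fin n))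
          (fun j : {u // u ∈ Aᶜ} => (j : Fin n)))
      ≤ schmidtRank (graphState d n ω Γ) := by
  have := Fact.mk hd
  have hc : (((d : ℝ) ^ (-(n : ℝ) / 2) : ℝ) : ℂ) ≠ 0 := by
    exact_mod_cast (Real.rpow_pos_of_pos (by exact_mod_cast hd.pos) _).ne'
  calc d ^ _ = Fintype.card (ZMod d) ^ _ := by rw [ZMod.card]
    _ ≤ _ := card_pow_rank_le_rank_charMatrix hω.zmodChar_injective _
    _ = (flattening A (graphState d n ω Γ)).rank := by
      rw [flattening_graphState hω.pow_eq_one hΓsymm, rank_diagonal_mul_mul_diagonal]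
      · exact Pi.isUnit_iff.2 fun a => (isUnit_iff_ne_zero.2 hc).mul (AddChar.val_isUnit _ _)
      · exact Pi.isUnit_iff.2 fun b => AddChar.val_isUnit _ _
    _ ≤ schmidtRank (graphState d n ω Γ) := rank_flattening_le_schmidtRank ⟨0, hn⟩ _ A
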